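/- arXiv:1209.0587 — 6 statements merged into one kernel-verified Lean document; each statement's English description precedes it below -/
import Mathlib

section
/- An injective monotone partial self-map α of the integers belongs to 𝓘↗∞(ℤ) (i.e. has cofinite domain and cofinite range) if and only if there exist integers d_α and u_α such that for every integer m ≤ d_α both m−1 and m lie in dom α with α(m−1) = α(m) − 1, and for every integer n ≥ u_α both n and n+1 lie in dom α with α(n+1) = α(n) + 1. -/
/-- A monotone injective partial self-map of `ℤ` with cofinite domain and cofinite range,
encoded as a function `ℤ → Option ℤ` where `none` means "undefined". -/
structure IsMIP (f : ℤ → Option ℤ) : Prop where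
  inj : ∀ ⦃x y a : ℤ⦄, f x = some a → f y = some a → x = y
  mono : ∀ ⦃x y a b : ℤ⦄, f x = some a → f y = some b → x ≤ y → a ≤ b
  cofin_dom : {x : ℤ | f x = none}.Finite
  cofin_ran : {y : ℤ | ∀ x : ℤ, f x ≠ some y}.Finite

/-- The monoid `𝓘↗∞(ℤ)` of monotone injective partial self-maps of `ℤ`
with cofinite domain and cofinite range. -/
def IZ : Type := {f : ℤ → Option ℤ // IsMIP f}

namespace IZ

/-- Composition of partial maps, written left-to-right: `(pcomp f g) x = g (f x)`. -/
def pcomp (f g : ℤ → Option ℤ) : ℤ → Option ℤ := fun x => (f x).bind g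

theorem isMIP_id : IsMIP (fun x : ℤ => some x) := by
  refine ⟨?_, ?_, ?_, ?_⟩
  · intro x y a hx hy; simp_all
  · intro x y a b hx hy h; simp_all
  · simp
  · have : {y : ℤ | ∀ x : ℤ, (fun x : ℤ => some x) x ≠ some y} = ∅ := by
      ext y; simp
    rw [this]; exact Set.finite_empty

theorem isMIP_comp {f g : ℤ → Option ℤ} (hf : IsMIP f) (hg : IsMIP g) :
    IsMIP (pcomp f g) := by
  refine ⟨?_, ?_, ?_, ?_⟩
  · intro x y a hx hy
    rw [pcomp, Option.bind_eq_some_iff] at hx hy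
    obtain ⟨b, hb, hba⟩ := hx
    obtain ⟨c, hc, hca⟩ := hy
    have hbc : b = c := hg.inj hba hca
    subst hbc
    exact hf.inj hb hc
  · intro x y a b hx hy hxy
    rw [pcomp, Option.bind_eq_some_iff] at hx hy
    obtain ⟨p, hp, hpa⟩ := hx
    obtain ⟨q, hq, hqb⟩ := hy
    exact hg.mono hpa hqb (hf.mono hp hq hxy)
  · have hsub : {x : ℤ | pcomp f g x = none} ⊆
        {x : ℤ | f x = none} ∪ f ⁻¹' (Option.some '' {a : ℤ | g a = none}) := by
      intro x hx
      simp only [Set.mem_setOf_eq, pcomp] at hx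
      cases hfx : f x with
      | none => exact Or.inl hfx
      | some a =>
        right
        rw [hfx] at hx
        simp only [Option.bind_some] at hx
        exact ⟨a, hx, hfx.symm⟩
    refine Set.Finite.subset (Set.Finite.union hf.cofin_dom ?_) hsub
    refine Set.Finite.preimage ?_ (hg.cofin_dom.image _)
    intro x hx y hy hxy
    obtain ⟨a, _, ha⟩ := hx
    obtain ⟨b, _, hb⟩ := hy
    have hfa : f x = some a := ha.symm
    have hfb : f y = some b := hb.symm
    have : some a = some b := by rw [← hfa, ← hfb, hxy]
    rw [Option.some_inj] at this
    subst this
    exact hf.inj hfa hfb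
  · have hsub : {y : ℤ | ∀ x : ℤ, pcomp f g x ≠ some y} ⊆
        {y : ℤ | ∀ x : ℤ, g x ≠ some y} ∪
          ((fun a => (g a).getD 0) '' {a : ℤ | ∀ x : ℤ, f x ≠ some a}) := by
      intro y hy
      simp only [Set.mem_setOf_eq] at hy
      by_cases hgy : ∀ a : ℤ, g a ≠ some y
      · exact Or.inl hgy
      · push_neg at hgy
        obtain ⟨a, hga⟩ := hgy
        right
        refine ⟨a, ?_, by simp [hga]⟩
        intro x hfx
        exact hy x (by simp [pcomp, hfx, hga])
    exact Set.Finite.subset (Set.Finite.union hg.cofin_ran (hf.cofin_ran.image _)) hsub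

instance : Monoid IZ where
  one := ⟨fun x => some x, isMIP_id⟩
  mul a b := ⟨pcomp a.1 b.1, isMIP_comp a.2 b.2⟩
  mul_assoc a b c := by
    apply Subtype.ext
    funext x
    exact Option.bind_assoc (a.1 x) b.1 c.1
  one_mul a := by
    apply Subtype.ext
    funext x
    rfl
  mul_one a := by
    apply Subtype.ext
    funext x
    show (a.1 x).bind some = a.1 x
    cases a.1 x <;> rfl

theorem mul_def (a b : IZ) : (a * b).1 = pcomp a.1 b.1 := rfl

theorem one_def : (1 : IZ).1 = fun x : ℤ => some x := rfl

/-- The domain of an element of `𝓘↗∞(ℤ)`. -/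
def dom (a : IZ) : Set ℤ := {x : ℤ | a.1 x ≠ none}

/-- The range of an element of `𝓘↗∞(ℤ)`. -/
def ran (a : IZ) : Set ℤ := {y : ℤ | ∃ x : ℤ, a.1 x = some y}

end IZ

/-!
An element of `𝓘↗∞(ℤ)` is defined on all large and all small integers and hits all large and
all small values. Once `n` is past a preimage of the threshold beyond which every value is hit,
a jump `f (n + 1) > f n + 1` would leave a value strictly between `f n` and `f (n + 1)` whose
preimage lies strictly between `n` and `n + 1`. Conversely, unit steps towards `±∞` make `f` a
translation on two rays, so the domain and the range can only miss integers in a bounded interval.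
-/

open Filter

section

variable {f : ℤ → Option ℤ}

theorem forall_ne_some_of_lt_of_lt
    (hmono : ∀ ⦃x y a b : ℤ⦄, f x = some a → f y = some b → x ≤ y → a ≤ b)
    {x a b c : ℤ} (ha : f x = some a) (hb : f (x + 1) = some b) (hac : a < c) (hcb : c < b) :
    ∀ y, f y ≠ some c := by
  intro y hc
  have hxy : x < y := not_le.mp fun hyx => (hmono hc ha hyx).not_gt hac
  have hyx : y < x + 1 := not_le.mp fun hxy => (hmono hb hc hxy).not_gt hcb
  omega

theorem IsMIP.lt_of_lt (h : IsMIP f) {x y a b : ℤ} (ha : f x = some a) (hb : f y = some b)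
    (hxy : x < y) : a < b :=
  (h.mono ha hb hxy.le).lt_of_ne fun hab => hxy.ne (h.inj ha (hab ▸ hb))

theorem IsMIP.eventually_ne_none_atTop (h : IsMIP f) : ∀ᶠ x in atTop, f x ≠ none :=
  atTop_le_cofinite h.cofin_dom.compl_mem_cofinite

theorem IsMIP.eventually_ne_none_atBot (h : IsMIP f) : ∀ᶠ x in atBot, f x ≠ none :=
  atBot_le_cofinite h.cofin_dom.compl_mem_cofinite

theorem IsMIP.eventually_mem_range_atTop (h : IsMIP f) : ∀ᶠ y in atTop, ∃ x, f x = some y :=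
  Eventually.mono (atTop_le_cofinite h.cofin_ran.compl_mem_cofinite) fun _ hy => by
    simpa using hy

theorem IsMIP.eventually_mem_range_atBot (h : IsMIP f) : ∀ᶠ y in atBot, ∃ x, f x = some y :=
  Eventually.mono (atBot_le_cofinite h.cofin_ran.compl_mem_cofinite) fun _ hy => by
    simpa using hy

theorem IsMIP.eventually_succ_atTop (h : IsMIP f) :
    ∀ᶠ n in atTop, ∃ a b, f n = some a ∧ f (n + 1) = some b ∧ b = a + 1 := by
  obtain ⟨A, hA⟩ := eventually_atTop.mp h.eventually_ne_none_atTop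
  obtain ⟨B, hB⟩ := eventually_atTop.mp h.eventually_mem_range_atTop
  obtain ⟨x₀, hx₀⟩ := hB B le_rfl
  filter_upwards [eventually_ge_atTop A, eventually_ge_atTop x₀] with n hAn hx₀n
  obtain ⟨a, ha⟩ := Option.ne_none_iff_exists'.mp (hA n hAn)
  obtain ⟨b, hb⟩ := Option.ne_none_iff_exists'.mp (hA (n + 1) (by omega))
  have hBa : B ≤ a := h.mono hx₀ ha hx₀n
  have hab : a < b := h.lt_of_lt ha hb (lt_add_one n)
  refine ⟨a, b, ha, hb, le_antisymm (not_lt.mp fun hjump => ?_) hab⟩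
  obtain ⟨y, hy⟩ := hB (a + 1) (by omega)
  exact forall_ne_some_of_lt_of_lt h.mono ha hb (lt_add_one a) hjump y hy

theorem IsMIP.eventually_pred_atBot (h : IsMIP f) :
    ∀ᶠ m in atBot, ∃ a b, f (m - 1) = some a ∧ f m = some b ∧ a = b - 1 := by
  obtain ⟨A, hA⟩ := eventually_atBot.mp h.eventually_ne_none_atBot
  obtain ⟨B, hB⟩ := eventually_atBot.mp h.eventually_mem_range_atBot
  obtain ⟨x₀, hx₀⟩ := hB B le_rfl
  filter_upwards [eventually_le_atBot A, eventually_le_atBot x₀] with m hmA hmx₀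
  obtain ⟨a, ha⟩ := Option.ne_none_iff_exists'.mp (hA (m - 1) (by omega))
  obtain ⟨b, hb⟩ := Option.ne_none_iff_exists'.mp (hA m hmA)
  have hbB : b ≤ B := h.mono hb hx₀ hmx₀
  have hab : a < b := h.lt_of_lt ha hb (sub_one_lt m)
  refine ⟨a, b, ha, hb, le_antisymm (by omega) (not_lt.mp fun hjump => ?_)⟩
  obtain ⟨y, hy⟩ := hB (b - 1) (by omega)
  rw [← sub_add_cancel m 1] at hb
  exact forall_ne_some_of_lt_of_lt h.mono ha hb hjump (sub_one_lt b) y hy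

theorem eq_some_add_of_succ {u c : ℤ}
    (hu : ∀ n, u ≤ n → ∃ a b, f n = some a ∧ f (n + 1) = some b ∧ b = a + 1)
    (hc : f u = some c) : ∀ n, u ≤ n → f n = some (c + (n - u)) := by
  refine Int.leInduction (by simpa using hc) fun n hun ih => ?_
  obtain ⟨a, b, ha, hb, rfl⟩ := hu n hun
  obtain rfl : a = c + (n - u) := Option.some_inj.mp (ha.symm.trans ih)
  rw [hb]
  congr 1
  ring

theorem eq_some_sub_of_pred {d c : ℤ}
    (hd : ∀ m, m ≤ d → ∃ a b, f (m - 1) = some a ∧ f m = some b ∧ a = b - 1)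
    (hc : f d = some c) : ∀ m, m ≤ d → f m = some (c - (d - m)) := by
  refine Int.leInductionDown (by simpa using hc) fun m hmd ih => ?_
  obtain ⟨a, b, ha, hb, rfl⟩ := hd m hmd
  obtain rfl : b = c - (d - m) := Option.some_inj.mp (hb.symm.trans ih)
  rw [ha]
  congr 1
  ring

theorem isMIP_of_pred_of_succ {d u : ℤ}
    (hinj : ∀ ⦃x y a : ℤ⦄, f x = some a → f y = some a → x = y)
    (hmono : ∀ ⦃x y a b : ℤ⦄, f x = some a → f y = some b → x ≤ y → a ≤ b)
    (hd : ∀ m, m ≤ d → ∃ a b, f (m - 1) = some a ∧ f m = some b ∧ a = b - 1)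
    (hu : ∀ n, u ≤ n → ∃ a b, f n = some a ∧ f (n + 1) = some b ∧ b = a + 1) : IsMIP f := by
  obtain ⟨c, -, hc, -, -⟩ := hu u le_rfl
  obtain ⟨-, c', -, hc', -⟩ := hd d le_rfl
  refine ⟨hinj, hmono, (Set.finite_Ioo d u).subset fun x hx => ?_,
    (Set.finite_Ioo c' c).subset fun y hy => ?_⟩
  · refine ⟨not_le.mp fun hxd => ?_, not_le.mp fun hux => ?_⟩
    · obtain ⟨-, b, -, hb, -⟩ := hd x hxd
      exact Option.some_ne_none b (hb.symm.trans hx)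
    · obtain ⟨a, -, ha, -⟩ := hu x hux
      exact Option.some_ne_none a (ha.symm.trans hx)
  · refine ⟨not_le.mp fun hyc' => ?_, not_le.mp fun hcy => ?_⟩
    · refine hy (d - (c' - y)) ?_
      rw [eq_some_sub_of_pred hd hc' _ (by omega)]
      congr 1
      ring
    · refine hy (u + (y - c)) ?_
      rw [eq_some_add_of_succ hu hc _ (by omega)]
      congr 1
      ring

end

/-- An injective monotone partial self-map `f` of the integers belongs to
`𝓘↗∞(ℤ)` (i.e. additionally has cofinite domain and cofinite range) if and only if
there exist integers `d` and `u` such that for every integer `m ≤ d` both `m - 1` and `m`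
lie in the domain with `f (m - 1) = f m - 1`, and for every integer `n ≥ u` both `n` and
`n + 1` lie in the domain with `f (n + 1) = f n + 1`. -/
theorem statement0 (f : ℤ → Option ℤ)
    (hinj : ∀ ⦃x y a : ℤ⦄, f x = some a → f y = some a → x = y)
    (hmono : ∀ ⦃x y a b : ℤ⦄, f x = some a → f y = some b → x ≤ y → a ≤ b) :
    IsMIP f ↔
      ∃ d u : ℤ,
        (∀ m : ℤ, m ≤ d → ∃ a b : ℤ, f (m - 1) = some a ∧ f m = some b ∧ a = b - 1) ∧
        (∀ n : ℤ, u ≤ n → ∃ a b : ℤ, f n = some a ∧ f (n + 1) = some b ∧ b = a + 1) := by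
  refine ⟨fun h => ?_, fun ⟨d, u, hd, hu⟩ => isMIP_of_pred_of_succ hinj hmono hd hu⟩
  obtain ⟨d, hd⟩ := eventually_atBot.mp h.eventually_pred_atBot
  obtain ⟨u, hu⟩ := eventually_atTop.mp h.eventually_succ_atTop
  exact ⟨d, u, hd, hu⟩
end

section
/- An element α of 𝓘↗∞(ℤ) belongs to the group of units H(𝕀) (i.e. α is invertible in the monoid) if and only if dom α = ℤ and α(n+1) = α(n) + 1 for every integer n. -/
/-! A unit of `𝓘↗∞(ℤ)` is a total map (because `α * α⁻¹ = 𝕀`) onto `ℤ` (because `α⁻¹ * α = 𝕀`);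
being injective and monotone it is a strictly increasing bijection of `ℤ`, i.e. an order
automorphism, and these commute with the successor `n ↦ n + 1`. Conversely, a total map with
`α (n + 1) = α n + 1` is a translation `n ↦ n + c`, whose inverse is the translation by `-c`. -/

theorem StrictMono.map_add_one_of_surjective {α β : Type*} [LinearOrder α] [Add α] [One α]
    [SuccAddOrder α] [LinearOrder β] [Add β] [One β] [SuccAddOrder β] {f : α → β}
    (hf : StrictMono f) (hsurj : Function.Surjective f) (x : α) : f (x + 1) = f x + 1 := by
  simpa only [Order.succ_eq_add_one, StrictMono.coe_orderIsoOfSurjective] using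
    (hf.orderIsoOfSurjective f hsurj).map_succ x

theorem Int.eq_map_zero_add_of_map_add_one {f : ℤ → ℤ} (h : ∀ n, f (n + 1) = f n + 1)
    (n : ℤ) : f n = f 0 + n := by
  induction n using Int.induction_on with
  | zero => simp
  | succ k ih => rw [h, ih, add_assoc]
  | pred k ih =>
    have := h (-(k : ℤ) - 1)
    rw [sub_add_cancel] at this
    omega

theorem IsMIP.strictMono_of_forall_eq_some {f : ℤ → Option ℤ} (hf : IsMIP f) {g : ℤ → ℤ}
    (hg : ∀ n, f n = some (g n)) : StrictMono g :=
  Monotone.strictMono_of_injective (fun _ _ hle => hf.mono (hg _) (hg _) hle)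
    fun _ _ heq => hf.inj (hg _) (heq ▸ hg _)

namespace IZ

theorem isMIP_add_const (c : ℤ) : IsMIP (fun x => some (x + c)) where
  inj _ _ _ hx hy := by simp only [Option.some_inj] at hx hy; omega
  mono _ _ _ _ hx hy hle := by simp only [Option.some_inj] at hx hy; omega
  cofin_dom := by simp
  cofin_ran := by
    convert Set.finite_empty
    exact Set.eq_empty_of_forall_notMem fun y hy => hy (y - c) (by simp)

def shift (c : ℤ) : IZ := ⟨fun x => some (x + c), isMIP_add_const c⟩

theorem shift_mul_shift (a b : ℤ) : shift a * shift b = shift (a + b) :=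
  Subtype.ext <| funext fun x => by
    rw [mul_def]
    simp [pcomp, shift, add_assoc]

theorem shift_zero : shift 0 = 1 :=
  Subtype.ext <| funext fun x => by simp [shift, one_def]

theorem isUnit_shift (c : ℤ) : IsUnit (shift c) :=
  ⟨⟨shift c, shift (-c), by rw [shift_mul_shift, add_neg_cancel, shift_zero],
    by rw [shift_mul_shift, neg_add_cancel, shift_zero]⟩, rfl⟩

theorem exists_of_mul_eq_one {α β : IZ} (h : α * β = 1) (x : ℤ) :
    ∃ a, α.1 x = some a ∧ β.1 a = some x :=
  Option.bind_eq_some_iff.mp (congrFun (congrArg Subtype.val h) x)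

theorem exists_strictMono_surjective_of_isUnit {α : IZ} (h : IsUnit α) :
    ∃ f : ℤ → ℤ, StrictMono f ∧ Function.Surjective f ∧ ∀ n, α.1 n = some (f n) := by
  obtain ⟨u, rfl⟩ := h
  choose f hf _ using exists_of_mul_eq_one u.mul_inv
  refine ⟨f, (u : IZ).2.strictMono_of_forall_eq_some hf, fun y => ?_, hf⟩
  obtain ⟨x, -, hx⟩ := exists_of_mul_eq_one u.inv_mul y
  exact ⟨x, Option.some_inj.mp ((hf x).symm.trans hx)⟩

end IZ

/-- An element `α` of `𝓘↗∞(ℤ)` is invertible in the monoid (belongs to the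
group of units `H(𝕀)`) if and only if `dom α = ℤ` and `α (n + 1) = α n + 1` for every
integer `n`. -/
theorem statement1 (α : IZ) :
    IsUnit α ↔ (IZ.dom α = Set.univ ∧
      ∀ n : ℤ, ∃ a : ℤ, α.1 n = some a ∧ α.1 (n + 1) = some (a + 1)) := by
  constructor
  · intro h
    obtain ⟨f, hmono, hsurj, hf⟩ := IZ.exists_strictMono_surjective_of_isUnit h
    refine ⟨Set.eq_univ_of_forall fun n => by simp [IZ.dom, hf], fun n => ⟨f n, hf n, ?_⟩⟩
    rw [hf, hmono.map_add_one_of_surjective hsurj]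
  · rintro ⟨-, hstep⟩
    choose f hf hf_succ using hstep
    have hf_add_one : ∀ n, f (n + 1) = f n + 1 := fun n =>
      Option.some_inj.mp ((hf (n + 1)).symm.trans (hf_succ n))
    have hα : α = IZ.shift (f 0) := Subtype.ext <| funext fun n => by
      rw [hf, Int.eq_map_zero_add_of_map_add_one hf_add_one n, add_comm]
      rfl
    exact hα ▸ IZ.isUnit_shift (f 0)
end

section
/- Two elements α, β of the monoid 𝓘↗∞(ℤ) are Green 𝓡-equivalent (i.e. α·𝓘↗∞(ℤ) ∪ {α} = β·𝓘↗∞(ℤ) ∪ {β} as right ideals, equivalently there exist χ, ζ in the monoid with α·χ = β and β·ζ = α) if and only if dom α = dom β. -/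
/-!
`𝓘↗∞(ℤ)` is an inverse monoid: the inverse of `a` is its partial inverse `a⁻¹`, and `a * a⁻¹` is
the identity restricted to `dom a`. Hence whenever `dom b ⊆ dom a` we get `a * (a⁻¹ * b) = b`;
conversely `dom (a * c) ⊆ dom a` always. So `b ∈ a · 𝓘↗∞(ℤ)` iff `dom b ⊆ dom a`, and `𝓡` is equality
of domains.
-/

namespace IsMIP

variable {f : ℤ → Option ℤ}

theorem le_of_map_le (hf : IsMIP f) {x y a b : ℤ} (hx : f x = some a) (hy : f y = some b)
    (hab : a ≤ b) : x ≤ y := by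
  by_contra! hyx
  have hba : b = a := le_antisymm (hf.mono hy hx hyx.le) hab
  subst hba
  exact hyx.ne (hf.inj hy hx)

end IsMIP

namespace IZ

open Classical in
noncomputable def pinv (f : ℤ → Option ℤ) : ℤ → Option ℤ := fun y =>
  if h : ∃ x, f x = some y then some h.choose else none

theorem pinv_eq_some_iff {f : ℤ → Option ℤ}
    (hinj : ∀ ⦃x y a : ℤ⦄, f x = some a → f y = some a → x = y) {x y : ℤ} :
    pinv f y = some x ↔ f x = some y := by
  unfold pinv
  split_ifs with h
  · exact ⟨fun hx => Option.some_inj.mp hx ▸ h.choose_spec,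
      fun hx => congrArg some (hinj h.choose_spec hx)⟩
  · exact ⟨nofun, fun hx => absurd ⟨x, hx⟩ h⟩

theorem pinv_eq_none_iff {f : ℤ → Option ℤ}
    (hinj : ∀ ⦃x y a : ℤ⦄, f x = some a → f y = some a → x = y) {y : ℤ} :
    pinv f y = none ↔ ∀ x, f x ≠ some y := by
  simp only [Option.eq_none_iff_forall_ne_some, ne_eq, pinv_eq_some_iff hinj]

theorem isMIP_pinv {f : ℤ → Option ℤ} (hf : IsMIP f) : IsMIP (pinv f) where
  inj y y' x hy hy' := by
    rw [pinv_eq_some_iff hf.inj] at hy hy'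
    exact Option.some_inj.mp (hy.symm.trans hy')
  mono y y' x x' hy hy' hyy' := by
    rw [pinv_eq_some_iff hf.inj] at hy hy'
    exact hf.le_of_map_le hy hy' hyy'
  cofin_dom := by
    simpa only [pinv_eq_none_iff hf.inj] using hf.cofin_ran
  cofin_ran := by
    simpa only [ne_eq, pinv_eq_some_iff hf.inj, ← Option.eq_none_iff_forall_ne_some] using hf.cofin_dom

noncomputable instance : Inv IZ := ⟨fun a => ⟨pinv a.1, isMIP_pinv a.2⟩⟩

theorem inv_apply_eq_some_iff (a : IZ) {x y : ℤ} : a⁻¹.1 y = some x ↔ a.1 x = some y :=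
  pinv_eq_some_iff a.2.inj

theorem dom_mul_subset (a c : IZ) : dom (a * c) ⊆ dom a := by
  intro x hx ha
  exact hx (by rw [mul_def, pcomp, ha, Option.bind_none])

theorem mul_inv_mul_of_dom_subset {a b : IZ} (h : dom b ⊆ dom a) : a * (a⁻¹ * b) = b := by
  apply Subtype.ext
  funext x
  change (a.1 x).bind (fun y => (a⁻¹.1 y).bind b.1) = b.1 x
  cases hax : a.1 x with
  | none =>
    have hx : x ∉ dom b := fun hx => h hx hax
    exact (not_not.mp hx).symm
  | some y =>
    rw [Option.bind_some, (inv_apply_eq_some_iff a).mpr hax, Option.bind_some]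

theorem exists_mul_eq_iff_dom_subset (a b : IZ) : (∃ c, a * c = b) ↔ dom b ⊆ dom a :=
  ⟨fun ⟨c, hc⟩ => hc ▸ dom_mul_subset a c, fun h => ⟨_, mul_inv_mul_of_dom_subset h⟩⟩

end IZ

/-- Two elements `α, β` of `𝓘↗∞(ℤ)` are Green `𝓡`-equivalent
(there exist `χ, ζ` with `α * χ = β` and `β * ζ = α`) if and only if
`dom α = dom β`. -/
theorem statement5 (α β : IZ) :
    (∃ χ ζ : IZ, α * χ = β ∧ β * ζ = α) ↔ IZ.dom α = IZ.dom β := by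
  simp only [exists_and_left, exists_and_right, IZ.exists_mul_eq_iff_dom_subset,
    Set.Subset.antisymm_iff, and_comm]
end

section
/- For all idempotents ε and φ of 𝓘↗∞(ℤ), the set of pairs (α, β) of elements of 𝓘↗∞(ℤ) satisfying α·β = ε and β·α = φ is infinite. -/
/-!
An idempotent of `𝓘↗∞(ℤ)` is the identity map of its domain, a cofinite subset of `ℤ`. A cofinite
subset of `ℤ` is a locally finite linear order without endpoints, hence order-isomorphic to `ℤ`;
composing with the translations of `ℤ` gives infinitely many order isomorphisms `σ` from the
domain of `ε` onto that of `φ`, and each yields the pair `(σ, σ⁻¹)` with `σσ⁻¹ = ε`, `σ⁻¹σ = φ`.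
-/

namespace IZ

theorem finite_compl_dom (a : IZ) : (dom a)ᶜ.Finite := by
  simpa [dom, Set.compl_ofPred] using a.2.cofin_dom

section OfOrderIso

variable {S T U : Set ℤ}

open Classical in
noncomputable def ofOrderIso (hS : Sᶜ.Finite) (hT : Tᶜ.Finite) (σ : S ≃o T) : IZ :=
  ⟨fun x => if h : x ∈ S then some (σ ⟨x, h⟩ : ℤ) else none,
    { inj := by
        intro x y a hx hy
        split_ifs at hx hy with hxS hyS
        simp only [Option.some.injEq] at hx hy
        simpa using σ.injective (Subtype.ext (hx.trans hy.symm))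
      mono := by
        intro x y a b hx hy hxy
        split_ifs at hx hy with hxS hyS
        simp only [Option.some.injEq] at hx hy
        rw [← hx, ← hy, Subtype.coe_le_coe, σ.le_iff_le]
        exact hxy
      cofin_dom := hS.subset fun x hx => by simpa using hx
      cofin_ran := hT.subset fun y hy hyT => hy (σ.symm ⟨y, hyT⟩) (by simp) }⟩

theorem ofOrderIso_apply (hS : Sᶜ.Finite) (hT : Tᶜ.Finite) (σ : S ≃o T) (x : S) :
    (ofOrderIso hS hT σ).1 x = some (σ x : ℤ) := by
  simp [ofOrderIso]

theorem ofOrderIso_apply_of_notMem (hS : Sᶜ.Finite) (hT : Tᶜ.Finite) (σ : S ≃o T) {x : ℤ}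
    (hx : x ∉ S) : (ofOrderIso hS hT σ).1 x = none := by
  simp [ofOrderIso, hx]

theorem ofOrderIso_mul (hS : Sᶜ.Finite) (hT : Tᶜ.Finite) (hU : Uᶜ.Finite) (σ : S ≃o T)
    (τ : T ≃o U) : ofOrderIso hS hT σ * ofOrderIso hT hU τ = ofOrderIso hS hU (σ.trans τ) := by
  refine Subtype.ext (funext fun x => ?_)
  by_cases hx : x ∈ S
  · simp [mul_def, pcomp, ofOrderIso_apply hS _ _ ⟨x, hx⟩, ofOrderIso_apply hT _ _ (σ ⟨x, hx⟩)]
  · simp [mul_def, pcomp, ofOrderIso_apply_of_notMem _ _ _ hx]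

theorem ofOrderIso_injective (hS : Sᶜ.Finite) (hT : Tᶜ.Finite) :
    Function.Injective (ofOrderIso hS hT) := by
  intro σ τ h
  ext x
  simpa [ofOrderIso_apply] using congrFun (congrArg Subtype.val h) x

end OfOrderIso

theorem eq_ofOrderIso_refl_of_isIdempotentElem {ε : IZ} (hε : IsIdempotentElem ε) :
    ε = ofOrderIso ε.finite_compl_dom ε.finite_compl_dom (OrderIso.refl _) := by
  refine Subtype.ext (funext fun x => ?_)
  cases hx : ε.1 x with
  | none => rw [ofOrderIso_apply_of_notMem _ _ _ (by simpa [dom] using hx)]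
  | some y =>
    have hy : ε.1 y = some y := by
      have h : (ε * ε).1 x = ε.1 x := by rw [hε]
      rwa [mul_def, pcomp, hx, Option.bind_some] at h
    obtain rfl : x = y := ε.2.inj hx hy
    rw [ofOrderIso_apply _ _ _ ⟨x, by simp [dom, hx]⟩]
    rfl

end IZ

theorem exists_gt_mem_of_finite_compl {S : Set ℤ} (hS : Sᶜ.Finite) (a : ℤ) : ∃ b ∈ S, a < b := by
  obtain ⟨M, hM⟩ := hS.bddAbove
  refine ⟨max a M + 1, by_contra fun h => ?_, by omega⟩
  linarith [hM h, le_max_right a M]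

theorem exists_lt_mem_of_finite_compl {S : Set ℤ} (hS : Sᶜ.Finite) (a : ℤ) : ∃ b ∈ S, b < a := by
  obtain ⟨M, hM⟩ := hS.bddBelow
  refine ⟨min a M - 1, by_contra fun h => ?_, by omega⟩
  linarith [hM h, min_le_right a M]

theorem nonempty_orderIso_int_of_finite_compl {S : Set ℤ} (hS : Sᶜ.Finite) :
    Nonempty (S ≃o ℤ) := by
  classical
  let := LinearLocallyFiniteOrder.succOrder S
  let := LinearLocallyFiniteOrder.predOrder S
  have : NoMaxOrder S := ⟨fun a =>
    let ⟨b, hb, hab⟩ := exists_gt_mem_of_finite_compl hS a; ⟨⟨b, hb⟩, hab⟩⟩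
  have : NoMinOrder S := ⟨fun a =>
    let ⟨b, hb, hba⟩ := exists_lt_mem_of_finite_compl hS a; ⟨⟨b, hb⟩, hba⟩⟩
  have : Nonempty S := let ⟨b, hb, _⟩ := exists_gt_mem_of_finite_compl hS 0; ⟨⟨b, hb⟩⟩
  exact ⟨orderIsoIntOfLinearSuccPredArch⟩

theorem infinite_orderIso_of_finite_compl {S T : Set ℤ} (hS : Sᶜ.Finite) (hT : Tᶜ.Finite) :
    Infinite (S ≃o T) := by
  obtain ⟨eS⟩ := nonempty_orderIso_int_of_finite_compl hS
  obtain ⟨eT⟩ := nonempty_orderIso_int_of_finite_compl hT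
  refine Infinite.of_injective (fun n : ℤ => eS.trans ((OrderIso.addRight n).trans eT.symm)) ?_
  intro n m h
  simpa using congrArg eT (DFunLike.congr_fun h (eS.symm 0))

/-- For all idempotents `ε, φ` of `𝓘↗∞(ℤ)`, the set of pairs `(α, β)` with
`α * β = ε` and `β * α = φ` is infinite. -/
theorem statement8 (ε φ : IZ) (hε : ε * ε = ε) (hφ : φ * φ = φ) :
    {p : IZ × IZ | p.1 * p.2 = ε ∧ p.2 * p.1 = φ}.Infinite := by
  have hε' := ε.finite_compl_dom
  have hφ' := φ.finite_compl_dom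
  have := infinite_orderIso_of_finite_compl hε' hφ'
  refine Set.infinite_of_injective_forall_mem
    (f := fun σ => (IZ.ofOrderIso hε' hφ' σ, IZ.ofOrderIso hφ' hε' σ.symm))
    (fun σ τ h => IZ.ofOrderIso_injective hε' hφ' (congrArg Prod.fst h)) fun σ => ?_
  simp only [Set.mem_ofPred_eq, IZ.ofOrderIso_mul, OrderIso.self_trans_symm,
    OrderIso.symm_trans_self]
  exact ⟨(IZ.eq_ofOrderIso_refl_of_isIdempotentElem hε).symm,
    (IZ.eq_ofOrderIso_refl_of_isIdempotentElem hφ).symm⟩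
end

section
/- For all elements α, β of 𝓘↗∞(ℤ), both the set {χ ∈ 𝓘↗∞(ℤ) : α·χ = β} and the set {χ ∈ 𝓘↗∞(ℤ) : χ·α = β} are finite. -/
/-!
Two solutions `χ, χ'` of `α * χ = β` agree on the range of `α`, and two solutions of
`χ * α = β` agree on the domain of `β` (as `α` is injective); in both cases they agree on a
cofinite set. Monotonicity then traps each of the finitely many remaining values between the
common values at two points of that cofinite set, leaving finitely many choices.
-/

namespace IZ

theorem finite_compl_ran (a : IZ) : (ran a)ᶜ.Finite :=
  a.2.cofin_ran.subset fun _ hy x hx => hy ⟨x, hx⟩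

theorem mul_apply (a b : IZ) (x : ℤ) : (a * b).1 x = (a.1 x).bind b.1 := rfl

theorem eqOn_ran_of_mul_eq {α β χ χ' : IZ} (hχ : α * χ = β) (hχ' : α * χ' = β) :
    Set.EqOn χ.1 χ'.1 (ran α) := by
  rintro _ ⟨z, hz⟩
  have h := congrArg (fun γ : IZ => γ.1 z) (hχ.trans hχ'.symm)
  simpa only [mul_apply, hz, Option.bind_some] using h

theorem eqOn_dom_of_mul_eq {α β χ χ' : IZ} (hχ : χ * α = β) (hχ' : χ' * α = β) :
    Set.EqOn χ.1 χ'.1 (dom β) := by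
  intro x hx
  obtain ⟨c, hc⟩ := Option.ne_none_iff_exists'.mp hx
  obtain ⟨d, hd, hdc⟩ :=
    Option.bind_eq_some_iff.mp ((mul_apply χ α x).symm.trans (hχ ▸ hc))
  obtain ⟨d', hd', hdc'⟩ :=
    Option.bind_eq_some_iff.mp ((mul_apply χ' α x).symm.trans (hχ' ▸ hc))
  rw [hd, hd', α.2.inj hdc hdc']

theorem finite_setOf_eqOn (γ : IZ) {D : Set ℤ} (hD : Dᶜ.Finite) :
    {χ : IZ | Set.EqOn χ.1 γ.1 D}.Finite := by
  set E := D ∩ dom γ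
  have hE : Eᶜ.Finite := by
    rw [Set.compl_inter]
    exact hD.union (finite_compl_dom γ)
  have := hE.to_subtype
  obtain ⟨m, hm⟩ := hE.bddBelow
  obtain ⟨M, hM⟩ := hE.bddAbove
  have hmE : m - 1 ∈ E := by_contra fun h => by have := hm h; omega
  have hME : M + 1 ∈ E := by_contra fun h => by have := hM h; omega
  obtain ⟨p, hp⟩ := Option.ne_none_iff_exists'.mp hmE.2
  obtain ⟨q, hq⟩ := Option.ne_none_iff_exists'.mp hME.2
  refine Set.Finite.of_injOn (f := fun χ (x : ↥Eᶜ) => χ.1 x)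
    (t := Set.pi Set.univ fun _ => insert none (some '' Set.Icc p q)) ?_ ?_
    (Set.Finite.pi fun _ => ((Set.finite_Icc p q).image _).insert none)
  · intro χ hχ x _
    show χ.1 x ∈ _
    cases hx : χ.1 x with
    | none => exact Or.inl rfl
    | some y =>
      have hxm : m - 1 ≤ x := by have := hm x.2; omega
      have hxM : x ≤ M + 1 := by have := hM x.2; omega
      refine Or.inr ⟨y, ⟨χ.2.mono ?_ hx hxm, χ.2.mono hx ?_ hxM⟩, rfl⟩
      · rw [hχ hmE.1, hp]
      · rw [hχ hME.1, hq]
  · intro χ hχ χ' hχ' h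
    refine Subtype.ext (funext fun x => ?_)
    by_cases hx : x ∈ E
    · rw [hχ hx.1, hχ' hx.1]
    · exact congrFun h ⟨x, hx⟩

theorem finite_of_pairwise_eqOn {S : Set IZ} {D : Set ℤ} (hD : Dᶜ.Finite)
    (h : ∀ χ ∈ S, ∀ χ' ∈ S, Set.EqOn χ.1 χ'.1 D) : S.Finite := by
  obtain rfl | ⟨γ, hγ⟩ := S.eq_empty_or_nonempty
  · exact Set.finite_empty
  · exact (finite_setOf_eqOn γ hD).subset fun χ hχ => h χ hχ γ hγ

end IZ

/-- For all `α, β` in `𝓘↗∞(ℤ)`, both `{χ : α * χ = β}` and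
`{χ : χ * α = β}` are finite. -/
theorem statement12 (α β : IZ) :
    {χ : IZ | α * χ = β}.Finite ∧ {χ : IZ | χ * α = β}.Finite :=
  ⟨IZ.finite_of_pairwise_eqOn (IZ.finite_compl_ran α) fun _ hχ _ hχ' =>
      IZ.eqOn_ran_of_mul_eq hχ hχ',
    IZ.finite_of_pairwise_eqOn (IZ.finite_compl_dom β) fun _ hχ _ hχ' =>
      IZ.eqOn_dom_of_mul_eq hχ hχ'⟩
end

section
/- Let 𝔠 be the relation on 𝓘↗∞(ℤ) defined by: α 𝔠 β if and only if there exists an idempotent ε ∈ 𝓘↗∞(ℤ) with α·ε = β·ε. Then 𝔠 is a semigroup congruence (the least group congruence on this inverse monoid) and the quotient semigroup 𝓘↗∞(ℤ)/𝔠 is isomorphic to the direct product ℤ × ℤ of two copies of the additive group of integers. -/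
/-! Every `α ∈ 𝓘↗∞(ℤ)` is a translation `n ↦ n + d` near `-∞` and `n ↦ n + c` near `+∞`: far
out every value is attained, so a monotone injection can skip none. The pair `(d, c)` is additive
under composition and vanishes on idempotents, which are partial identities. Conversely, maps with
the same pair differ only on a finite set, and composing both with the partial identity that omits
their values there makes them equal. -/

open Filter

def IsEventuallyShift (l : Filter ℤ) (f : ℤ → Option ℤ) (c : ℤ) : Prop :=
  ∀ᶠ n in l, f n = some (n + c)

namespace IsEventuallyShift

variable {l : Filter ℤ} {f g : ℤ → Option ℤ} {c d : ℤ}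

theorem unique [l.NeBot] (hc : IsEventuallyShift l f c) (hd : IsEventuallyShift l f d) :
    c = d := by
  obtain ⟨n, hnc, hnd⟩ := (hc.and hd).exists
  simpa using hnc.symm.trans hnd

theorem pcomp (hf : IsEventuallyShift l f c) (hg : IsEventuallyShift l g d)
    (hl : Tendsto (· + c) l l) : IsEventuallyShift l (IZ.pcomp f g) (c + d) := by
  filter_upwards [hf, hl.eventually hg] with n hfn hgn
  simp [IZ.pcomp, hfn, hgn, add_assoc]

end IsEventuallyShift

section IsMIP

variable {f : ℤ → Option ℤ}

theorem IsMIP.lt_of_lt_s15 (hf : IsMIP f) {x y p q : ℤ} (hx : f x = some p) (hy : f y = some q)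
    (h : x < y) : p < q :=
  (hf.mono hx hy h.le).lt_of_ne fun hpq => h.ne (hf.inj hx (hpq ▸ hy))

theorem IsMIP.eventually_mem_domain {l : Filter ℤ} (hf : IsMIP f) (hl : l ≤ cofinite) :
    ∀ᶠ x in l, ∃ y, f x = some y :=
  Eventually.mono (hl hf.cofin_dom.compl_mem_cofinite) fun _ hx => Option.ne_none_iff_exists'.1 hx

theorem IsMIP.eventually_mem_range {l : Filter ℤ} (hf : IsMIP f) (hl : l ≤ cofinite) :
    ∀ᶠ y in l, ∃ x, f x = some y :=
  Eventually.mono (hl hf.cofin_ran.compl_mem_cofinite) fun _ hy => by simpa using hy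

theorem IsMIP.eq_of_pcomp_self_eq (hf : IsMIP f) (he : IZ.pcomp f f = f) {x y : ℤ}
    (hx : f x = some y) : y = x := by
  have hy : f y = some y := by rw [← hx, ← congrFun he x, IZ.pcomp, hx, Option.bind_some]
  exact hf.inj hy hx

theorem IsMIP.neg_conj (hf : IsMIP f) : IsMIP fun x => (f (-x)).map Neg.neg where
  inj x y a hx hy := by
    simp only [Option.map_eq_some_iff] at hx hy
    obtain ⟨p, hp, rfl⟩ := hx
    obtain ⟨q, hq, hqp⟩ := hy
    rw [neg_inj.1 hqp] at hq
    exact neg_inj.1 (hf.inj hp hq)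
  mono x y a b hx hy hxy := by
    simp only [Option.map_eq_some_iff] at hx hy
    obtain ⟨p, hp, rfl⟩ := hx
    obtain ⟨q, hq, rfl⟩ := hy
    exact neg_le_neg (hf.mono hq hp (neg_le_neg hxy))
  cofin_dom := by
    simpa using hf.cofin_dom.preimage neg_injective.injOn
  cofin_ran := by
    refine (hf.cofin_ran.preimage neg_injective.injOn).subset fun y hy x hx => hy (-x) ?_
    simp [hx]

theorem IsMIP.exists_isEventuallyShift_atTop (hf : IsMIP f) : ∃ c, IsEventuallyShift atTop f c := by
  obtain ⟨N, hdom⟩ := eventually_atTop.1 (hf.eventually_mem_domain atTop_le_cofinite)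
  obtain ⟨M, hran⟩ := eventually_atTop.1 (hf.eventually_mem_range atTop_le_cofinite)
  obtain ⟨v, hv⟩ := hdom N le_rfl
  obtain ⟨x₀, hx₀⟩ := hran (max M v) (le_max_left _ _)
  have hN : N ≤ x₀ := not_lt.1 fun h => (hf.lt_of_lt_s15 hx₀ hv h).not_ge (le_max_right _ _)
  refine ⟨max M v - x₀, eventually_atTop.2 ⟨x₀, fun n hn => ?_⟩⟩
  induction n, hn using Int.leInduction with
  | base => simp [hx₀]
  | succ n hn ih =>
    -- Every value above `M` is attained, and only to the right of `n`: `f` skips no value.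
    obtain ⟨w, hw⟩ := hdom (n + 1) (by omega)
    obtain ⟨p, hp⟩ := hran (n + (max M v - x₀) + 1) (by omega)
    have hnw := hf.lt_of_lt_s15 ih hw (lt_add_one n)
    have hnp : n < p := not_le.1 fun h => (hf.mono hp ih h).not_gt (lt_add_one _)
    have hwp := hf.mono hw hp (by omega)
    rw [hw]
    congr 1
    omega

theorem IsMIP.exists_isEventuallyShift_atBot (hf : IsMIP f) : ∃ c, IsEventuallyShift atBot f c := by
  obtain ⟨c, hc⟩ := hf.neg_conj.exists_isEventuallyShift_atTop
  refine ⟨-c, (tendsto_neg_atBot_atTop.eventually hc).mono fun n hn => ?_⟩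
  simp only [neg_neg, Option.map_eq_some_iff] at hn
  obtain ⟨y, hy, hyn⟩ := hn
  rw [hy]
  congr 1
  omega

theorem IsMIP.isEventuallyShift_zero_of_pcomp_self_eq {l : Filter ℤ} (hf : IsMIP f)
    (he : IZ.pcomp f f = f) (hl : l ≤ cofinite) : IsEventuallyShift l f 0 :=
  (hf.eventually_mem_domain hl).mono fun _ ⟨_, hy⟩ => by rw [hy, hf.eq_of_pcomp_self_eq he hy, add_zero]

end IsMIP

namespace IZ

-- A junk value unless `l` is `atTop` or `atBot`, where `a` is eventually a translation.
noncomputable def shiftAt (l : Filter ℤ) (a : IZ) : ℤ :=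
  Classical.epsilon (IsEventuallyShift l a.1)

section shiftAt

variable {l : Filter ℤ} (hl : l = atTop ∨ l = atBot)
include hl

theorem isEventuallyShift_shiftAt (a : IZ) : IsEventuallyShift l a.1 (shiftAt l a) := by
  refine Classical.epsilon_spec ?_
  rcases hl with rfl | rfl
  exacts [a.2.exists_isEventuallyShift_atTop, a.2.exists_isEventuallyShift_atBot]

theorem shiftAt_eq {a : IZ} {c : ℤ} (h : IsEventuallyShift l a.1 c) : shiftAt l a = c := by
  have : l.NeBot := by rcases hl with rfl | rfl <;> infer_instance
  exact (isEventuallyShift_shiftAt hl a).unique h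

theorem shiftAt_mul (a b : IZ) : shiftAt l (a * b) = shiftAt l a + shiftAt l b := by
  have htr : Tendsto (· + shiftAt l a) l l := by
    rcases hl with rfl | rfl
    exacts [tendsto_atTop_add_const_right _ _ tendsto_id,
      tendsto_atBot_add_const_right _ _ tendsto_id]
  exact shiftAt_eq hl ((isEventuallyShift_shiftAt hl a).pcomp (isEventuallyShift_shiftAt hl b) htr)

theorem shiftAt_eq_zero_of_mul_self_eq {e : IZ} (he : e * e = e) : shiftAt l e = 0 := by
  have hcof : l ≤ cofinite := by
    rcases hl with rfl | rfl
    exacts [atTop_le_cofinite, atBot_le_cofinite]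
  exact shiftAt_eq hl (e.2.isEventuallyShift_zero_of_pcomp_self_eq (congrArg Subtype.val he) hcof)

theorem eventuallyEq_of_shiftAt_eq {a b : IZ} (h : shiftAt l a = shiftAt l b) : a.1 =ᶠ[l] b.1 := by
  filter_upwards [isEventuallyShift_shiftAt hl a, isEventuallyShift_shiftAt hl b] with n ha hb
  rw [ha, hb, h]

end shiftAt

open Classical in
noncomputable def idOff (s : Set ℤ) (hs : s.Finite) : IZ :=
  ⟨fun x => if x ∈ s then none else some x, by
    refine ⟨fun x y a hx hy => ?_, fun x y a b hx hy hxy => ?_, ?_, ?_⟩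
    · split_ifs at hx hy; simp_all
    · split_ifs at hx hy; simp_all
    · exact hs.subset fun x hx => by by_contra h; simp [h] at hx
    · exact hs.subset fun y hy => by by_contra h; exact hy y (if_neg h)⟩

theorem bind_idOff_eq_none {s : Set ℤ} (hs : s.Finite) {o : Option ℤ} (ho : o.getD 0 ∈ s) :
    o.bind (idOff s hs).1 = none := by
  cases o with
  | none => rfl
  | some y => simp_all [idOff]

theorem idOff_mul_self (s : Set ℤ) (hs : s.Finite) : idOff s hs * idOff s hs = idOff s hs := by
  refine Subtype.ext (funext fun x => ?_)
  show ((idOff s hs).1 x).bind (idOff s hs).1 = (idOff s hs).1 x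
  by_cases hx : x ∈ s <;> simp [idOff, hx]

theorem exists_mul_self_eq_and_mul_eq_of_eventuallyEq {a b : IZ} (h : a.1 =ᶠ[cofinite] b.1) :
    ∃ e : IZ, e * e = e ∧ a * e = b * e := by
  set D := {x | ¬a.1 x = b.1 x}
  have hD : D.Finite := eventually_cofinite.1 h
  -- `e` is undefined on every value `a` or `b` takes at a point where they differ.
  set s := (fun x => (a.1 x).getD 0) '' D ∪ (fun x => (b.1 x).getD 0) '' D
  have hs : s.Finite := (hD.image _).union (hD.image _)
  refine ⟨idOff s hs, idOff_mul_self s hs, Subtype.ext (funext fun x => ?_)⟩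
  by_cases hx : x ∈ D
  · rw [mul_def, mul_def, pcomp, pcomp, bind_idOff_eq_none hs (Or.inl ⟨x, hx, rfl⟩),
      bind_idOff_eq_none hs (Or.inr ⟨x, hx, rfl⟩)]
  · simp only [mul_def, pcomp, not_not.1 hx]

def piecewiseShift (p q : ℤ) : IZ :=
  ⟨fun x => if x < 0 then some (x + p) else if p - q ≤ x then some (x + q) else none, by
    refine ⟨fun x y a hx hy => ?_, fun x y a b hx hy hxy => ?_, ?_, ?_⟩
    · split_ifs at hx hy <;> simp only [Option.some_inj] at hx hy <;> omega
    · split_ifs at hx hy <;> simp only [Option.some_inj] at hx hy <;> omega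
    · refine (Set.finite_Icc 0 (p - q)).subset fun x hx => ?_
      simp only [Set.mem_ofPred_eq] at hx
      split_ifs at hx with h₁ h₂
      simp only [Set.mem_Icc]
      omega
    · refine (Set.finite_Icc p q).subset fun y hy => ?_
      simp only [Set.mem_ofPred_eq, Set.mem_Icc] at hy ⊢
      by_contra hpq
      by_cases h : y < p
      · exact hy (y - p) (by rw [if_pos (by omega)]; simp)
      · exact hy (y - q) (by rw [if_neg (by omega), if_pos (by omega)]; simp)⟩

theorem shiftAt_atBot_piecewiseShift (p q : ℤ) : shiftAt atBot (piecewiseShift p q) = p :=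
  shiftAt_eq (Or.inr rfl) <| (eventually_lt_atBot 0).mono fun _ hx => if_pos hx

theorem shiftAt_atTop_piecewiseShift (p q : ℤ) : shiftAt atTop (piecewiseShift p q) = q :=
  shiftAt_eq (Or.inl rfl) <| (eventually_ge_atTop (max 0 (p - q))).mono fun x hx => by
    simp only [piecewiseShift, if_neg (show ¬x < 0 by omega), if_pos (show p - q ≤ x by omega)]

noncomputable def shifts (a : IZ) : ℤ × ℤ := (shiftAt atBot a, shiftAt atTop a)

theorem shifts_mul (a b : IZ) : shifts (a * b) = shifts a + shifts b := by
  simp only [shifts, shiftAt_mul (Or.inr rfl), shiftAt_mul (Or.inl rfl), Prod.mk_add_mk]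

theorem shifts_eq_zero_of_mul_self_eq {e : IZ} (he : e * e = e) : shifts e = 0 := by
  rw [shifts, shiftAt_eq_zero_of_mul_self_eq (Or.inr rfl) he,
    shiftAt_eq_zero_of_mul_self_eq (Or.inl rfl) he, Prod.zero_eq_mk]

theorem shifts_surjective : Function.Surjective shifts := fun ⟨p, q⟩ =>
  ⟨piecewiseShift p q, by
    rw [shifts, shiftAt_atBot_piecewiseShift, shiftAt_atTop_piecewiseShift]⟩

theorem shifts_eq_iff {a b : IZ} :
    shifts a = shifts b ↔ ∃ e : IZ, e * e = e ∧ a * e = b * e := by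
  constructor
  · intro h
    apply exists_mul_self_eq_and_mul_eq_of_eventuallyEq
    rw [Int.cofinite_eq]
    exact eventually_sup.2 ⟨eventuallyEq_of_shiftAt_eq (Or.inr rfl) (congrArg Prod.fst h),
      eventuallyEq_of_shiftAt_eq (Or.inl rfl) (congrArg Prod.snd h)⟩
  · rintro ⟨e, he, hab⟩
    simpa [shifts_mul, shifts_eq_zero_of_mul_self_eq he] using congrArg shifts hab

end IZ

/-- The relation `α 𝔠 β ↔ ∃ idempotent ε, α * ε = β * ε` is a semigroup
congruence on `𝓘↗∞(ℤ)` (the least group congruence), and the quotient is isomorphic to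
the direct product `ℤ × ℤ` of two copies of the additive group of integers. -/
theorem statement15 :
    let c : IZ → IZ → Prop := fun α β => ∃ ε : IZ, ε * ε = ε ∧ α * ε = β * ε
    Equivalence c ∧
    (∀ a b a' b' : IZ, c a b → c a' b' → c (a * a') (b * b')) ∧
    ∃ f : IZ → ℤ × ℤ, Function.Surjective f ∧
      (∀ a b : IZ, f (a * b) = f a + f b) ∧
      (∀ a b : IZ, f a = f b ↔ c a b) := by
  intro c
  have hc : ∀ a b, IZ.shifts a = IZ.shifts b ↔ c a b := fun _ _ => IZ.shifts_eq_iff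
  refine ⟨⟨fun a => (hc a a).1 rfl, fun h => (hc _ _).1 ((hc _ _).2 h).symm,
      fun h h' => (hc _ _).1 (((hc _ _).2 h).trans ((hc _ _).2 h'))⟩,
    fun a b a' b' h h' => (hc _ _).1 ?_, IZ.shifts, IZ.shifts_surjective, IZ.shifts_mul, hc⟩
  rw [IZ.shifts_mul, IZ.shifts_mul, (hc _ _).2 h, (hc _ _).2 h']
end
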